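/- Let -1 < β < 0 and set η₀ = (1/2)((1+β)/(1-β))^{1/3} (1,1) and A(z) = z₁⁴ + 2β z₁²z₂² + z₂⁴. Then for all ξ ∈ ℝ²: Re A(ξ + iη₀) + ((1+β)/(1-β))^{1/3} = -β(ξ₁² - ξ₂²)² + (β+1)[(ξ₁² - c)² + (ξ₂² - c)²] - β((1+β)/(1-β))^{2/3}(ξ₁+ξ₂)² ≥ 0, where c = (3-β)/(4(1+β)^{1/3}(1-β)^{2/3}), with equality exactly at ξ = ±ξ₀ where ξ₀ = (1/2)(3-β)^{1/2}(1+β)^{-1/6}(1-β)^{-1/3}(1,-1). -/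

import Mathlib

/-! With `T = ((1+β)/(1-β))^{1/3}`, the identity is a polynomial identity in `ξ, T, c` modulo the
relations `T³(1-β) = 1+β` and `4c(1+β) = (3-β)T²`. For `-1 < β < 0` its right-hand side is a sum
of three squares with nonnegative weights, which vanishes exactly when `ξ₁ + ξ₂ = 0` and
`ξ₁² = c = ξ₀²`. -/

open Complex

lemma re_quartic_eq (β x₁ y₁ x₂ y₂ : ℝ) :
    (((x₁ : ℂ) + y₁ * I) ^ 4 + 2 * β * ((x₁ : ℂ) + y₁ * I) ^ 2 * ((x₂ : ℂ) + y₂ * I) ^ 2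
        + ((x₂ : ℂ) + y₂ * I) ^ 4).re
      = x₁ ^ 4 - 6 * x₁ ^ 2 * y₁ ^ 2 + y₁ ^ 4
        + 2 * β * (x₁ ^ 2 * x₂ ^ 2 - x₁ ^ 2 * y₂ ^ 2 - x₂ ^ 2 * y₁ ^ 2
          - 4 * x₁ * x₂ * y₁ * y₂ + y₁ ^ 2 * y₂ ^ 2)
        + x₂ ^ 4 - 6 * x₂ ^ 2 * y₂ ^ 2 + y₂ ^ 4 := by
  simp only [pow_succ, pow_zero, one_mul, add_re, add_im, mul_re, mul_im, ofReal_re,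
    ofReal_im, I_re, I_im, re_ofNat, im_ofNat]
  ring

lemma re_quartic_add_eq_weighted_sum_sq (β T c x y : ℝ) (hβ : 1 + β ≠ 0)
    (hT : T ^ 3 * (1 - β) = 1 + β) (hc : 4 * c * (1 + β) = (3 - β) * T ^ 2) :
    (((x : ℂ) + ((1 / 2 * T : ℝ) : ℂ) * I) ^ 4
        + 2 * β * ((x : ℂ) + ((1 / 2 * T : ℝ) : ℂ) * I) ^ 2
          * ((y : ℂ) + ((1 / 2 * T : ℝ) : ℂ) * I) ^ 2
        + ((y : ℂ) + ((1 / 2 * T : ℝ) : ℂ) * I) ^ 4).re + T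
      = -β * (x ^ 2 - y ^ 2) ^ 2 + (β + 1) * ((x ^ 2 - c) ^ 2 + (y ^ 2 - c) ^ 2)
        - β * T ^ 2 * (x + y) ^ 2 := by
  rw [re_quartic_eq]
  refine mul_left_cancel₀ hβ ?_
  linear_combination ((1 + β) * (x ^ 2 + y ^ 2) / 2
      - (4 * c * (1 + β) + (3 - β) * T ^ 2) / 8) * hc - T * hT

lemma weighted_sum_sq_nonneg {β c K : ℝ} (hβ : β ≤ 0) (hβ1 : 0 ≤ β + 1) (hK : 0 ≤ K) (x y : ℝ) :
    0 ≤ -β * (x ^ 2 - y ^ 2) ^ 2 + (β + 1) * ((x ^ 2 - c) ^ 2 + (y ^ 2 - c) ^ 2)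
      - β * K * (x + y) ^ 2 := by
  have h₁ := mul_nonneg (neg_nonneg.2 hβ) (sq_nonneg (x ^ 2 - y ^ 2))
  have h₂ := mul_nonneg hβ1 (add_nonneg (sq_nonneg (x ^ 2 - c)) (sq_nonneg (y ^ 2 - c)))
  have h₃ := mul_nonneg (mul_nonneg (neg_nonneg.2 hβ) hK) (sq_nonneg (x + y))
  linarith

lemma weighted_sum_sq_eq_zero_iff {β c K ξ₀ : ℝ} (hβ : β < 0) (hβ1 : 0 < β + 1) (hK : 0 < K)
    (hξ₀ : ξ₀ ^ 2 = c) (x y : ℝ) :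
    -β * (x ^ 2 - y ^ 2) ^ 2 + (β + 1) * ((x ^ 2 - c) ^ 2 + (y ^ 2 - c) ^ 2)
      - β * K * (x + y) ^ 2 = 0 ↔ (x = ξ₀ ∧ y = -ξ₀) ∨ (x = -ξ₀ ∧ y = ξ₀) := by
  constructor
  · intro h
    have h₁ := mul_nonneg (neg_nonneg.2 hβ.le) (sq_nonneg (x ^ 2 - y ^ 2))
    have h₂ := mul_nonneg hβ1.le (add_nonneg (sq_nonneg (x ^ 2 - c)) (sq_nonneg (y ^ 2 - c)))
    have h₃ := mul_nonneg (mul_nonneg (neg_nonneg.2 hβ.le) hK.le) (sq_nonneg (x + y))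
    have hxy : y = -x := by
      have : (x + y) ^ 2 = 0 := by
        have : -β * K * (x + y) ^ 2 = 0 := by linarith
        simpa [hβ.ne, hK.ne'] using this
      linarith [pow_eq_zero_iff two_ne_zero |>.1 this]
    have hx : x ^ 2 = ξ₀ ^ 2 := by
      have : (x ^ 2 - c) ^ 2 = 0 := by
        have : (β + 1) * ((x ^ 2 - c) ^ 2 + (y ^ 2 - c) ^ 2) = 0 := by linarith
        nlinarith [sq_nonneg (x ^ 2 - c), sq_nonneg (y ^ 2 - c)]
      linarith [pow_eq_zero_iff two_ne_zero |>.1 this]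
    rcases sq_eq_sq_iff_eq_or_eq_neg.1 hx with rfl | rfl
    · exact .inl ⟨rfl, hxy⟩
    · exact .inr ⟨rfl, by rw [hxy, neg_neg]⟩
  · rintro (⟨rfl, rfl⟩ | ⟨rfl, rfl⟩) <;> subst hξ₀ <;> ring

lemma rpow_one_third_pow_three {x : ℝ} (hx : 0 ≤ x) : (x ^ (1 / 3 : ℝ)) ^ 3 = x := by
  simpa using Real.rpow_inv_natCast_pow hx three_ne_zero

lemma rpow_two_thirds {x : ℝ} (hx : 0 ≤ x) : x ^ (2 / 3 : ℝ) = (x ^ (1 / 3 : ℝ)) ^ 2 := by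
  rw [← Real.rpow_mul_natCast hx]; norm_num

lemma sq_half_mul_rpow_eq_div {p q r : ℝ} (hp : 0 ≤ p) (hq : 0 ≤ q) (hr : 0 ≤ r) :
    (1 / 2 * p ^ ((1 : ℝ) / 2) * q ^ (-(1 : ℝ) / 6) * r ^ (-(1 : ℝ) / 3)) ^ 2
      = p / (4 * q ^ ((1 : ℝ) / 3) * r ^ ((2 : ℝ) / 3)) := by
  simp only [mul_pow, ← Real.rpow_mul_natCast hp, ← Real.rpow_mul_natCast hq,
    ← Real.rpow_mul_natCast hr]
  rw [show -(1 : ℝ) / 6 * (2 : ℕ) = -(1 / 3) by norm_num,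
    show -(1 : ℝ) / 3 * (2 : ℕ) = -(2 / 3) by norm_num, Real.rpow_neg hq, Real.rpow_neg hr]
  norm_num
  ring

lemma four_mul_div_mul_eq_mul_sq_rpow_div (p : ℝ) {q r : ℝ} (hq : 0 < q) (hr : 0 < r) :
    4 * (p / (4 * q ^ ((1 : ℝ) / 3) * r ^ ((2 : ℝ) / 3))) * q
      = p * ((q / r) ^ ((1 : ℝ) / 3)) ^ 2 := by
  have ha : 0 < q ^ ((1 : ℝ) / 3) := Real.rpow_pos_of_pos hq _
  have hb : 0 < r ^ ((1 : ℝ) / 3) := Real.rpow_pos_of_pos hr _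
  rw [Real.div_rpow hq.le hr.le, rpow_two_thirds hr.le]
  field_simp
  linear_combination (-p) * rpow_one_third_pow_three hq.le

theorem stmt12 (β : ℝ) (hβ1 : -1 < β) (hβ2 : β < 0)
    (η0 c ξ01 : ℝ)
    (hη0 : η0 = 1 / 2 * ((1 + β) / (1 - β)) ^ ((1 : ℝ) / 3))
    (hc : c = (3 - β) / (4 * (1 + β) ^ ((1 : ℝ) / 3) * (1 - β) ^ ((2 : ℝ) / 3)))
    (hξ0 : ξ01 = 1 / 2 * (3 - β) ^ ((1 : ℝ) / 2) * (1 + β) ^ (-(1 : ℝ) / 6)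
        * (1 - β) ^ (-(1 : ℝ) / 3))
    (ξ1 ξ2 : ℝ) :
    (((ξ1 : ℂ) + (η0 : ℂ) * I) ^ 4
        + 2 * β * ((ξ1 : ℂ) + (η0 : ℂ) * I) ^ 2 * ((ξ2 : ℂ) + (η0 : ℂ) * I) ^ 2
        + ((ξ2 : ℂ) + (η0 : ℂ) * I) ^ 4).re + ((1 + β) / (1 - β)) ^ ((1 : ℝ) / 3)
      = -β * (ξ1 ^ 2 - ξ2 ^ 2) ^ 2
        + (β + 1) * ((ξ1 ^ 2 - c) ^ 2 + (ξ2 ^ 2 - c) ^ 2)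
        - β * ((1 + β) / (1 - β)) ^ ((2 : ℝ) / 3) * (ξ1 + ξ2) ^ 2
    ∧ 0 ≤ -β * (ξ1 ^ 2 - ξ2 ^ 2) ^ 2
        + (β + 1) * ((ξ1 ^ 2 - c) ^ 2 + (ξ2 ^ 2 - c) ^ 2)
        - β * ((1 + β) / (1 - β)) ^ ((2 : ℝ) / 3) * (ξ1 + ξ2) ^ 2
    ∧ (-β * (ξ1 ^ 2 - ξ2 ^ 2) ^ 2
        + (β + 1) * ((ξ1 ^ 2 - c) ^ 2 + (ξ2 ^ 2 - c) ^ 2)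
        - β * ((1 + β) / (1 - β)) ^ ((2 : ℝ) / 3) * (ξ1 + ξ2) ^ 2 = 0
      ↔ (ξ1 = ξ01 ∧ ξ2 = -ξ01) ∨ (ξ1 = -ξ01 ∧ ξ2 = ξ01)) := by
  have h1β : 0 < 1 + β := by linarith
  have h2β : 0 < 1 - β := by linarith
  have hquot : 0 ≤ (1 + β) / (1 - β) := div_nonneg h1β.le h2β.le
  rw [rpow_two_thirds hquot, hη0]
  set T := ((1 + β) / (1 - β)) ^ ((1 : ℝ) / 3) with hT
  have hT3 : T ^ 3 * (1 - β) = 1 + β := by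
    rw [hT, rpow_one_third_pow_three hquot, div_mul_cancel₀ _ h2β.ne']
  have hcT : 4 * c * (1 + β) = (3 - β) * T ^ 2 := by
    rw [hc, four_mul_div_mul_eq_mul_sq_rpow_div _ h1β h2β]
  have hξc : ξ01 ^ 2 = c := by
    rw [hξ0, hc, sq_half_mul_rpow_eq_div (by linarith) h1β.le h2β.le]
  have hK : 0 < T ^ 2 := by positivity
  exact ⟨re_quartic_add_eq_weighted_sum_sq β T c ξ1 ξ2 h1β.ne' hT3 hcT,
    weighted_sum_sq_nonneg hβ2.le (by linarith) hK.le ξ1 ξ2,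
    weighted_sum_sq_eq_zero_iff hβ2 (by linarith) hK hξc ξ1 ξ2⟩
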